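/- arXiv:1604.04402 — 2 statements merged into one kernel-verified Lean document; each statement's English description precedes it below -/
import Mathlib

section
/- Every configuration x on a torus with 0 < d₁(x) ≤ 1/2 that is not a perfect checkerboard pattern (i.e., not in C_e^1 ∪ C_o^1 with exactly half ones checkered) contains a 2×2 window with either exactly one 1, or with two adjacent 1s and two adjacent 0s. -/
/-- Number of 1s in the 2×2 window at position `c`. -/
def wcount {n₁ n₂ : ℕ} (x : ZMod n₁ × ZMod n₂ → Bool) (c : ZMod n₁ × ZMod n₂) : ℕ :=
  (if x c then 1 else 0) + (if x (c + (1, 0)) then 1 else 0) +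
    (if x (c + (0, 1)) then 1 else 0) + (if x (c + (1, 1)) then 1 else 0)

/-- The 2×2 window at `c` is checkered: equal states on each diagonal,
different states on adjacent cells. -/
def Checkered {n₁ n₂ : ℕ} (x : ZMod n₁ × ZMod n₂ → Bool) (c : ZMod n₁ × ZMod n₂) : Prop :=
  x c = x (c + (1, 1)) ∧ x (c + (1, 0)) = x (c + (0, 1)) ∧ x c ≠ x (c + (1, 0))

/-!
If no window is good, an empty window forces its right and upper neighbours to be empty, so an
empty window would spread over the whole torus and erase every 1. Hence every window holds at
least two 1s; since the window counts sum to four times the number of 1s, the density bound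
forces exactly two 1s in each window, and each window is checkered. Then `x` flips at every unit
step, so it is a perfect checkerboard and its 1s all lie on one parity class.
-/

theorem nat_pair_induction {P : ℕ → ℕ → Prop} (h₀ : P 0 0)
    (hk : ∀ k l, P k l → P (k + 1) l) (hl : ∀ k l, P k l → P k (l + 1)) (k l : ℕ) : P k l := by
  induction l with
  | zero =>
    induction k with
    | zero => exact h₀
    | succ k ih => exact hk _ _ ih
  | succ l ih => exact hl _ _ ih

section Torus

variable {n₁ n₂ : ℕ}

theorem natCast_succ_fst (k l : ℕ) :
    (((k + 1 : ℕ) : ZMod n₁), (l : ZMod n₂)) = ((k : ZMod n₁), (l : ZMod n₂)) + (1, 0) := by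
  ext <;> simp

theorem natCast_succ_snd (k l : ℕ) :
    ((k : ZMod n₁), ((l + 1 : ℕ) : ZMod n₂)) = ((k : ZMod n₁), (l : ZMod n₂)) + (0, 1) := by
  ext <;> simp

theorem add_one_zero_add_zero_one (c : ZMod n₁ × ZMod n₂) : c + (1, 0) + (0, 1) = c + (1, 1) := by
  ext <;> simp [add_assoc]

theorem add_zero_one_add_one_zero (c : ZMod n₁ × ZMod n₂) : c + (0, 1) + (1, 0) = c + (1, 1) := by
  ext <;> simp [add_assoc]

variable [NeZero n₁] [NeZero n₂]

theorem forall_of_closed_under_unit_steps {P : ZMod n₁ × ZMod n₂ → Prop} {c₀ : ZMod n₁ × ZMod n₂}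
    (h₀ : P c₀) (h₁₀ : ∀ c, P c → P (c + (1, 0))) (h₀₁ : ∀ c, P c → P (c + (0, 1)))
    (c : ZMod n₁ × ZMod n₂) : P c := by
  have hkl : ∀ k l : ℕ, P (c₀ + ((k : ZMod n₁), (l : ZMod n₂))) :=
    nat_pair_induction (by simpa [Prod.mk_zero_zero] using h₀)
      (fun k l h => by rw [natCast_succ_fst, ← add_assoc]; exact h₁₀ _ h)
      (fun k l h => by rw [natCast_succ_snd, ← add_assoc]; exact h₀₁ _ h)
  simpa [← Prod.mk_sub_mk] using hkl (c - c₀).1.val (c - c₀).2.val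

end Torus

section Windows

variable {n₁ n₂ : ℕ} (x : ZMod n₁ × ZMod n₂ → Bool)

def IsGoodWindow (c : ZMod n₁ × ZMod n₂) : Prop :=
  wcount x c = 1 ∨ (wcount x c = 2 ∧ ¬Checkered x c)

variable {x}

theorem wcount_eq_zero_iff {c : ZMod n₁ × ZMod n₂} :
    wcount x c = 0 ↔
      x c = false ∧ x (c + (1, 0)) = false ∧ x (c + (0, 1)) = false ∧ x (c + (1, 1)) = false := by
  unfold wcount
  cases x c <;> cases x (c + (1, 0)) <;> cases x (c + (0, 1)) <;> cases x (c + (1, 1)) <;> simp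

theorem wcount_eq_zero_of_not_isGoodWindow {c : ZMod n₁ × ZMod n₂} (hc : ¬IsGoodWindow x c)
    (h₀ : x c = false) (hadj : x (c + (1, 0)) = false ∨ x (c + (0, 1)) = false) :
    wcount x c = 0 := by
  revert hc hadj
  unfold IsGoodWindow Checkered wcount
  cases x (c + (1, 0)) <;> cases x (c + (0, 1)) <;> cases x (c + (1, 1)) <;> simp [h₀]

theorem Checkered.add_one_zero {c : ZMod n₁ × ZMod n₂} (h : Checkered x c) :
    x (c + (1, 0)) = !x c :=
  Bool.eq_not_iff.mpr h.2.2.symm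

theorem Checkered.add_zero_one {c : ZMod n₁ × ZMod n₂} (h : Checkered x c) :
    x (c + (0, 1)) = !x c :=
  h.2.1 ▸ h.add_one_zero

end Windows

section Configurations

variable {n₁ n₂ : ℕ} [NeZero n₁] [NeZero n₂] {x : ZMod n₁ × ZMod n₂ → Bool}

theorem eq_false_of_forall_not_isGoodWindow (hbad : ∀ c, ¬IsGoodWindow x c)
    {c₀ : ZMod n₁ × ZMod n₂} (h₀ : wcount x c₀ = 0) (c : ZMod n₁ × ZMod n₂) : x c = false := by
  have hempty : ∀ c, wcount x c = 0 := by
    refine forall_of_closed_under_unit_steps h₀ (fun c hc => ?_) (fun c hc => ?_)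
    · obtain ⟨-, h₁₀, -, h₁₁⟩ := wcount_eq_zero_iff.mp hc
      exact wcount_eq_zero_of_not_isGoodWindow (hbad _) h₁₀
        (.inr <| by rwa [add_one_zero_add_zero_one])
    · obtain ⟨-, -, h₀₁, h₁₁⟩ := wcount_eq_zero_iff.mp hc
      exact wcount_eq_zero_of_not_isGoodWindow (hbad _) h₀₁
        (.inl <| by rwa [add_zero_one_add_one_zero])
  exact (wcount_eq_zero_iff.mp (hempty c)).1

theorem sum_ite_add_eq_card (v : ZMod n₁ × ZMod n₂) :
    ∑ c, (if x (c + v) then 1 else 0) = (Finset.univ.filter (fun c => x c = true)).card := by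
  rw [Finset.card_filter]
  exact Fintype.sum_equiv (Equiv.addRight v) _ _ fun _ => rfl

theorem sum_wcount :
    ∑ c, wcount x c = 4 * (Finset.univ.filter (fun c => x c = true)).card := by
  have h₀ := sum_ite_add_eq_card (x := x) 0
  simp only [add_zero] at h₀
  simp only [wcount, Finset.sum_add_distrib, sum_ite_add_eq_card, h₀]
  ring

theorem wcount_eq_two_of_two_le
    (hd : 2 * (Finset.univ.filter (fun c : ZMod n₁ × ZMod n₂ => x c = true)).card ≤ n₁ * n₂)
    (h : ∀ c, 2 ≤ wcount x c) (c : ZMod n₁ × ZMod n₂) : wcount x c = 2 := by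
  have hle : ∑ c, wcount x c ≤ ∑ _c : ZMod n₁ × ZMod n₂, 2 := by
    rw [sum_wcount, Finset.sum_const, Finset.card_univ]
    simp only [Fintype.card_prod, ZMod.card, smul_eq_mul]
    omega
  have heq := le_antisymm (Finset.sum_le_sum fun c _ => h c) hle
  exact ((Finset.sum_eq_sum_iff_of_le fun c _ => h c).mp heq c (Finset.mem_univ c)).symm

theorem eq_iff_even_of_forall_checkered (h : ∀ c, Checkered x c) (c : ZMod n₁ × ZMod n₂) :
    x c = x 0 ↔ Even (c.1.val + c.2.val) := by
  have hkl : ∀ k l : ℕ, (x ((k : ZMod n₁), (l : ZMod n₂)) = x 0 ↔ Even (k + l)) :=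
    nat_pair_induction (by simp [Prod.mk_zero_zero])
      (fun k l ih => by
        rw [natCast_succ_fst, (h _).add_one_zero, Bool.not_eq_iff, ne_eq, ih, add_right_comm,
          Nat.even_add_one])
      (fun k l ih => by
        rw [natCast_succ_snd, (h _).add_zero_one, Bool.not_eq_iff, ne_eq, ih, ← add_assoc,
          Nat.even_add_one])
  simpa using hkl c.1.val c.2.val

end Configurations

theorem non_checkerboard_gives_good_window_general
    (n₁ n₂ : ℕ) [NeZero n₁] [NeZero n₂]
    (x : ZMod n₁ × ZMod n₂ → Bool)
    (hone : ∃ c : ZMod n₁ × ZMod n₂, x c = true)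
    (hd : 2 * (Finset.univ.filter (fun c : ZMod n₁ × ZMod n₂ => x c = true)).card ≤ n₁ * n₂)
    (hne : ¬(∀ c : ZMod n₁ × ZMod n₂, x c = true → Even (c.1.val + c.2.val)))
    (hno : ¬(∀ c : ZMod n₁ × ZMod n₂, x c = true → ¬Even (c.1.val + c.2.val))) :
    ∃ c : ZMod n₁ × ZMod n₂,
      wcount x c = 1 ∨ (wcount x c = 2 ∧ ¬Checkered x c) := by
  show ∃ c, IsGoodWindow x c
  by_contra! hbad
  obtain ⟨c₁, hc₁⟩ := hone
  have htwo : ∀ c, 2 ≤ wcount x c := fun c => by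
    have h₀ : wcount x c ≠ 0 := fun h => by
      simp [eq_false_of_forall_not_isGoodWindow hbad h c₁] at hc₁
    have h₁ : wcount x c ≠ 1 := fun h => hbad c (.inl h)
    omega
  have hcheck : ∀ c, Checkered x c := fun c =>
    by_contra fun h => hbad c (.inr ⟨wcount_eq_two_of_two_le hd htwo c, h⟩)
  cases h0 : x 0
  · exact hno fun c hc => by
      rw [← eq_iff_even_of_forall_checkered hcheck, hc, h0]
      decide
  · exact hne fun c hc => (eq_iff_even_of_forall_checkered hcheck c).mp (hc.trans h0.symm)

/-- on an even-sized torus, any configuration with at least one 1,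
density of 1s at most 1/2, and which is not a sub-checkerboard (neither in
`C_e^1` nor in `C_o^1`) contains a 2×2 window with exactly one 1, or with two
adjacent 1s and two adjacent 0s (two 1s not placed diagonally). -/
theorem non_checkerboard_gives_good_window
    (n₁ n₂ : ℕ) [NeZero n₁] [NeZero n₂] (h₁ : Even n₁) (h₂ : Even n₂)
    (x : ZMod n₁ × ZMod n₂ → Bool)
    (hone : ∃ c : ZMod n₁ × ZMod n₂, x c = true)
    (hd : 2 * (Finset.univ.filter (fun c : ZMod n₁ × ZMod n₂ => x c = true)).card ≤ n₁ * n₂)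
    (hne : ¬(∀ c : ZMod n₁ × ZMod n₂, x c = true → Even (c.1.val + c.2.val)))
    (hno : ¬(∀ c : ZMod n₁ × ZMod n₂, x c = true → ¬Even (c.1.val + c.2.val))) :
    ∃ c : ZMod n₁ × ZMod n₂,
      wcount x c = 1 ∨ (wcount x c = 2 ∧ ¬Checkered x c) :=
  non_checkerboard_gives_good_window_general n₁ n₂ x hone hd hne hno
end

section
/- In dimension 1, the traffic rule (CA rule 184) preserves archipelagos: if x ∈ {0,1}^{Z/nZ} is a q-archipelago (q ∈ {0,1}), then F₁₈₄(x) is also a q-archipelago. -/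
/-- The traffic rule (elementary CA rule 184) on `ℤ/nℤ`:
`F(x)_i = 1` iff (`x_{i-1} = 1` and `x_i = 0`) or (`x_i = 1` and `x_{i+1} = 1`). -/
def F184 {n : ℕ} (x : ZMod n → Bool) : ZMod n → Bool :=
  fun i => (x (i - 1) && !x i) || (x i && x (i + 1))

/-!
On a `1`-archipelago no car is blocked, so every car advances and `F₁₈₄` is the shift
`x ↦ x (· - 1)`; on a `0`-archipelago every empty cell lies between two cars, so `F₁₈₄` is the
shift `x ↦ x (· + 1)`. Being an archipelago is invariant under translation.
-/

def IsArchipelago {G β : Type*} [Add G] [One G] (q : β) (x : G → β) : Prop :=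
  ∀ i, ¬(x i = q ∧ x (i + 1) = q)

theorem IsArchipelago.comp_add_right {G β : Type*} [AddCommSemigroup G] [One G] {q : β}
    {x : G → β} (hx : IsArchipelago q x) (c : G) : IsArchipelago q (fun i => x (i + c)) := by
  intro i
  simpa only [add_right_comm i 1 c] using hx (i + c)

theorem F184_eq_of_isArchipelago_true {n : ℕ} {x : ZMod n → Bool}
    (hx : IsArchipelago true x) : F184 x = fun i => x (i - 1) := by
  funext i
  have hleft := hx (i - 1)
  have hright := hx i
  rw [sub_add_cancel] at hleft
  cases hxi : x i <;> simp_all [F184]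

theorem F184_eq_of_isArchipelago_false {n : ℕ} {x : ZMod n → Bool}
    (hx : IsArchipelago false x) : F184 x = fun i => x (i + 1) := by
  funext i
  have hleft := hx (i - 1)
  have hright := hx i
  rw [sub_add_cancel] at hleft
  cases hxi : x i <;> simp_all [F184]

theorem F184_preserves_archipelagos_general
    (n : ℕ) (q : Bool) (x : ZMod n → Bool)
    (hx : ∀ i : ZMod n, ¬(x i = q ∧ x (i + 1) = q)) :
    ∀ i : ZMod n, ¬(F184 x i = q ∧ F184 x (i + 1) = q) := by
  change IsArchipelago q x at hx
  cases q
  · rw [F184_eq_of_isArchipelago_false hx]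
    exact hx.comp_add_right 1
  · rw [F184_eq_of_isArchipelago_true hx]
    simpa only [IsArchipelago, sub_eq_add_neg] using hx.comp_add_right (-1)

/-- rule 184 preserves `q`-archipelagos: if no two (cyclically)
consecutive cells of `x` are both in state `q`, the same holds for `F₁₈₄(x)`. -/
theorem F184_preserves_archipelagos
    (n : ℕ) [NeZero n] (q : Bool) (x : ZMod n → Bool)
    (hx : ∀ i : ZMod n, ¬(x i = q ∧ x (i + 1) = q)) :
    ∀ i : ZMod n, ¬(F184 x i = q ∧ F184 x (i + 1) = q) :=
  F184_preserves_archipelagos_general n q x hx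
end
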